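/- Let (R, φ) be a real Picard–Vessiot extension for the system φY = AY over (k, φ) with fundamental matrix U ∈ GL_n(R) and total ring of fractions K, let G be the real difference Galois group, and let 𝓖 be the set of linear algebraic subgroups of G (subgroups H ⊆ G whose image ρ_U(H) is Zariski closed in GL_n(C[i])). Then for every H ∈ 𝓖, the fixed ring K^H := {x ∈ K : ψ(x) = x for all ψ ∈ H} is a φ-stable subring of K containing k in which every non-zero-divisor is a unit. -/

import Mathlib

universe u v w x

open scoped TensorProduct

section DifferenceAlgebra

variable {R : Type*} [CommRing R]

/-- A difference ideal of `(R, φ)`: an ideal stable under `φ`. -/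
def IsDiffIdeal (φ : R ≃+* R) (I : Ideal R) : Prop :=
  ∀ y ∈ I, φ y ∈ I

/-- A simple difference ring: the only difference ideals are `(0)` and `R`. -/
def IsSimpleDiffRing (φ : R ≃+* R) : Prop :=
  ∀ I : Ideal R, IsDiffIdeal φ I → I = ⊥ ∨ I = ⊤

/-- A real (commutative) ring: `0` is not a sum of squares of nonzero elements. -/
def IsRealRing (A : Type*) [CommRing A] : Prop :=
  ∀ (m : ℕ) (f : Fin m → A), (∀ i, f i ≠ 0) → ∑ i, f i ^ 2 = 0 → m = 0

/-- A real closed field: a real field with no proper real algebraic extension. -/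
def IsRealClosedField (C : Type u) [Field C] : Prop :=
  IsRealRing C ∧ ∀ (L : Type u) [Field L] [Algebra C L],
    Algebra.IsAlgebraic C L → IsRealRing L → Function.Surjective (algebraMap C L)

/-- The field of constants of a difference field `(k, φ)`. -/
def fixedSubfield {k : Type*} [Field k] (φ : k ≃+* k) : Subfield k where
  carrier := {y | φ y = y}
  mul_mem' := fun {a b} ha hb => by
    simp only [Set.mem_setOf_eq, map_mul] at *
    rw [ha, hb]
  one_mem' := map_one φ
  add_mem' := fun {a b} ha hb => by
    simp only [Set.mem_setOf_eq, map_add] at *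
    rw [ha, hb]
  zero_mem' := map_zero φ
  neg_mem' := fun {a} ha => by
    simp only [Set.mem_setOf_eq, map_neg] at *
    rw [ha]
  inv_mem' := fun a ha => by
    simp only [Set.mem_setOf_eq, map_inv₀] at *
    rw [ha]

/-- `(S, φS)` is a difference ring extension of `(k, φk)`. -/
def DiffCompat {k : Type*} [CommRing k] (S : Type*) [CommRing S] [Algebra k S]
    (φk : k ≃+* k) (φS : S ≃+* S) : Prop :=
  ∀ y : k, φS (algebraMap k S y) = algebraMap k S (φk y)

/-- `U` is a fundamental matrix of solutions of `φ Y = A Y` in `S`. -/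
def IsFundamentalMatrix {k : Type*} [CommRing k] {S : Type*} [CommRing S] [Algebra k S]
    (φS : S ≃+* S) {n : ℕ} (A : Matrix (Fin n) (Fin n) k)
    (U : Matrix (Fin n) (Fin n) S) : Prop :=
  IsUnit U.det ∧ U.map ⇑φS = A.map (algebraMap k S) * U

/-- `S` is generated, as a `k`-algebra, by the entries of `U` and `det(U)⁻¹`. -/
def GeneratedByFund (k : Type*) [CommSemiring k] {S : Type*} [CommRing S] [Algebra k S]
    {n : ℕ} (U : Matrix (Fin n) (Fin n) S) : Prop :=
  Algebra.adjoin k ((Set.range fun p : Fin n × Fin n => U p.1 p.2) ∪ {Ring.inverse U.det}) = ⊤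

/-- A Picard–Vessiot extension for `φ Y = A Y` over `(k, φk)`. -/
def IsPicardVessiot (k : Type*) [Field k] (S : Type*) [CommRing S] [Algebra k S]
    (φk : k ≃+* k) (φS : S ≃+* S) {n : ℕ} (A : Matrix (Fin n) (Fin n) k) : Prop :=
  Nontrivial S ∧ DiffCompat S φk φS ∧
    (∃ U : Matrix (Fin n) (Fin n) S, IsFundamentalMatrix φS A U ∧ GeneratedByFund k U) ∧
    IsSimpleDiffRing φS

/-- `Ri = R[i]`: the ring obtained from `R` by adjoining a square root `j` of `-1`,
free as an `R`-module with basis `1, j`. -/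
def IsAdjoinI (R : Type*) [CommRing R] (Ri : Type*) [CommRing Ri] [Algebra R Ri]
    (j : Ri) : Prop :=
  j ^ 2 = -1 ∧ ∀ y : Ri, ∃! p : R × R, y = algebraMap R Ri p.1 + algebraMap R Ri p.2 * j

end DifferenceAlgebra

/-!
A simple difference ring is reduced (its nilradical is a difference ideal), and `R` is Noetherian
as a finitely generated `k`-algebra. So its total ring of fractions `K` is a reduced Noetherian
ring in which every maximal ideal is an associated, hence minimal, prime: `K` is reduced
Artinian, a finite product of fields, and every `y ∈ K` has some `x` with `y * x * y = y`.
The idempotent `x * y` depends only on `y`, so every automorphism fixing `y` fixes it. If `y` is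
a non-zero-divisor of `K^H`, then `1 - x * y ∈ K^H` kills `y`, so `x * y = 1`, and the inverse
`x` of the `H`-invariant `y` is `H`-invariant too.
-/

lemma IsSimpleDiffRing.isReduced {R : Type*} [CommRing R] {φ : R ≃+* R}
    (h : IsSimpleDiffRing φ) : IsReduced R := by
  have hnil : IsDiffIdeal φ (nilradical R) := fun y hy =>
    mem_nilradical.mpr ((mem_nilradical.mp hy).map φ)
  rcases h _ hnil with hbot | htop
  · exact nilradical_eq_bot_iff.mp hbot
  · have : Subsingleton R := by
      obtain ⟨m, hm⟩ := mem_nilradical.mp (htop ▸ Submodule.mem_top : (1 : R) ∈ nilradical R)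
      exact subsingleton_of_zero_eq_one (by simpa using hm.symm)
    infer_instance

lemma GeneratedByFund.finiteType {k S : Type*} [CommRing k] [CommRing S] [Algebra k S]
    {n : ℕ} {U : Matrix (Fin n) (Fin n) S} (h : GeneratedByFund k U) :
    Algebra.FiniteType k S :=
  ⟨Subalgebra.fg_def.mpr ⟨_, (Set.finite_range _).union (Set.finite_singleton _), h⟩⟩

lemma IsAssociatedPrime.mem_minimalPrimes {A : Type*} [CommRing A] [IsReduced A]
    [IsNoetherianRing A] {I : Ideal A} (h : IsAssociatedPrime I A) : I ∈ minimalPrimes A := by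
  obtain ⟨hI, x, rfl⟩ := isAssociatedPrime_iff.mp h
  have hx : x ∉ Submodule.colon (⊥ : Submodule A A) {x} := fun hx => by
    have hxx : x * x = 0 := by simpa using Submodule.mem_colon_singleton.mp hx
    exact hI.ne_top (by simp [IsReduced.eq_zero x ⟨2, by rw [sq, hxx]⟩])
  refine ⟨⟨hI, bot_le⟩, fun p ⟨hp, _⟩ hle a ha => ?_⟩
  have hax : a * x = 0 := by simpa using Submodule.mem_colon_singleton.mp ha
  exact (hp.mem_or_mem (hax ▸ p.zero_mem)).resolve_right fun hxp => hx (hle hxp)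

lemma Ring.krullDimLE_zero_of_isFractionRing_self {A : Type*} [CommRing A] [IsReduced A]
    [IsNoetherianRing A] [IsFractionRing A A] : Ring.KrullDimLE 0 A :=
  .mk₀ fun p hp => by
    obtain ⟨M, hM, hpM⟩ := p.exists_le_maximal hp.ne_top
    have hMmin := (hM.mem_associatedPrimes_of_isFractionRing).mem_minimalPrimes
    exact (le_antisymm hpM (hMmin.2 ⟨hp, bot_le⟩ hpM)) ▸ hM

lemma IsArtinianRing.exists_mul_mul_eq_self {A : Type*} [CommRing A] [IsArtinianRing A]
    [IsReduced A] (y : A) : ∃ x, y * x * y = y := by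
  let (I : MaximalSpectrum A) : Field (A ⧸ I.asIdeal) :=
    have := I.isMaximal; Ideal.Quotient.field _
  let e := IsArtinianRing.equivPi A
  refine ⟨e.symm fun I => (e y I)⁻¹, e.injective (funext fun I => ?_)⟩
  simp [mul_inv_mul_cancel]

lemma IsFractionRing.exists_mul_mul_eq_self (R : Type*) {K : Type*} [CommRing R] [IsReduced R]
    [IsNoetherianRing R] [CommRing K] [Algebra R K] [IsFractionRing R K] (y : K) :
    ∃ x, y * x * y = y := by
  have : IsReduced K := isReduced_of_injective
    (IsLocalization.algEquiv (nonZeroDivisors R) K (Localization (nonZeroDivisors R)))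
    (AlgEquiv.injective _)
  have : IsNoetherianRing K := IsLocalization.isNoetherianRing (nonZeroDivisors R) K ‹_›
  have : IsFractionRing K K := IsFractionRing.idem R K
  have : Ring.KrullDimLE 0 K := Ring.krullDimLE_zero_of_isFractionRing_self
  have : IsArtinianRing K := IsNoetherianRing.isArtinianRing_of_krullDimLE_zero
  exact IsArtinianRing.exists_mul_mul_eq_self y

lemma RingHom.map_mul_eq_of_mul_mul_eq_self {L : Type*} [CommRing L] (f : L →+* L) {x y : L}
    (hy : f y = y) (hxy : y * x * y = y) : f (x * y) = x * y := by
  have he : x * y * y = y := by linear_combination hxy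
  have hfe : f (x * y) * y = y := by simpa [hy] using congrArg f he
  calc f (x * y) = f (x * y) * (x * y) := by
        rw [map_mul, hy]; linear_combination (-f x) * he
    _ = x * y := by linear_combination x * hfe

section FixedSubring

variable {K L : Type*} [CommRing K] [CommRing L] (ι : K →+* L) (H : Set (L ≃+* L))

def fixedSubring : Subring K :=
  ⨅ Ψ ∈ H, ((Ψ : L →+* L).comp ι).eqLocus ι

variable {ι H}

lemma mem_fixedSubring {y : K} : y ∈ fixedSubring ι H ↔ ∀ Ψ ∈ H, Ψ (ι y) = ι y := by
  simp [fixedSubring, Subring.mem_iInf]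

lemma map_mem_fixedSubring_iff (φK : K ≃+* K) (φL : L ≃+* L) (hι : ∀ y, φL (ι y) = ι (φK y))
    (hH : ∀ Ψ ∈ H, ∀ z, Ψ (φL z) = φL (Ψ z)) {y : K} :
    φK y ∈ fixedSubring ι H ↔ y ∈ fixedSubring ι H := by
  simp only [mem_fixedSubring, ← hι]
  exact forall₂_congr fun Ψ hΨ => by rw [hH Ψ hΨ, φL.injective.eq_iff]

lemma exists_mem_fixedSubring_mul_eq_one (hK : ∀ y : K, ∃ x, y * x * y = y) {y : K}
    (hy : y ∈ fixedSubring ι H) (hreg : ∀ z ∈ fixedSubring ι H, y * z = 0 → z = 0) :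
    ∃ z ∈ fixedSubring ι H, y * z = 1 := by
  obtain ⟨x, hx⟩ := hK y
  rw [mem_fixedSubring] at hy
  have hxy_mem : x * y ∈ fixedSubring ι H := mem_fixedSubring.mpr fun Ψ hΨ => by
    rw [map_mul]
    exact (Ψ : L →+* L).map_mul_eq_of_mul_mul_eq_self (hy Ψ hΨ)
      (by rw [← map_mul, ← map_mul, hx])
  have hxy : x * y = 1 := by
    have := hreg (1 - x * y) (sub_mem (one_mem _) hxy_mem) (by linear_combination -hx)
    linear_combination -this
  refine ⟨x, mem_fixedSubring.mpr fun Ψ hΨ => ?_, by rw [mul_comm, hxy]⟩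
  have hι : ι x * ι y = 1 := by rw [← map_mul, hxy, map_one]
  have hΨι : Ψ (ι x) * ι y = 1 := by rw [← hy Ψ hΨ, ← map_mul, hι, map_one]
  exact left_inv_eq_right_inv hΨι (by rw [mul_comm, hι])

end FixedSubring

theorem statement11_general
    {k : Type u} [Field k] (φk : k ≃+* k)
    {n : ℕ} (A : Matrix (Fin n) (Fin n) k)
    (R : Type v) [CommRing R] [Algebra k R] (φR : R ≃+* R)
    (hPV : IsPicardVessiot k R φk φR A)
    (U : Matrix (Fin n) (Fin n) R)
    -- `K`, the total ring of fractions of `R`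
    (K : Type w) [CommRing K] [Algebra R K] [IsLocalization (nonZeroDivisors R) K]
    (φK : K ≃+* K)
    -- `K[i]`
    (Ki : Type w) [CommRing Ki] [Algebra K Ki]
    (jK : Ki)
    (φKi : Ki ≃+* Ki) (hcompatKi : DiffCompat Ki φK φKi) :
    -- the embeddings of `R`, `k` and `C` into `K[i]`
    let fR : R → Ki := fun r => algebraMap K Ki (algebraMap R K r)
    let fk : k → Ki := fun c => fR (algebraMap k R c)
    let fC : (↥(fixedSubfield φk)) →+* Ki :=
      ((algebraMap K Ki).comp ((algebraMap R K).comp (algebraMap k R))).comp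
        (fixedSubfield φk).subtype
    -- `R[i]` and `C[i]` inside `K[i]`
    let RiSet : Set Ki := {y | ∃ a b : R, y = fR a + fR b * jK}
    let Ci : Set Ki := {y | ∃ a b : k, φk a = a ∧ φk b = b ∧ y = fk a + fk b * jK}
    -- the real difference Galois group `G`: difference automorphisms of `K[i]` fixing
    -- `k[i]` pointwise and stabilizing `R[i]` (i.e. the canonical extensions to `K[i]`
    -- of the difference automorphisms of `R[i]` fixing `k[i]` pointwise)
    let GCond : (Ki ≃+* Ki) → Prop := fun Ψ =>
      (∀ y : Ki, Ψ (φKi y) = φKi (Ψ y)) ∧ (∀ c : k, Ψ (fk c) = fk c) ∧ Ψ jK = jK ∧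
      (∀ y ∈ RiSet, Ψ y ∈ RiSet) ∧ (∀ y ∈ RiSet, Ψ.symm y ∈ RiSet)
    -- `ρ_U`
    let ρ : (Ki ≃+* Ki) → Matrix (Fin n) (Fin n) Ki := fun Ψ =>
      (U.map fR)⁻¹ * U.map fun r => Ψ (fR r)
    -- evaluation of a polynomial with coefficients in `C[i] = C + C·i` at a matrix
    let ev : (MvPolynomial (Fin n × Fin n) (↥(fixedSubfield φk)) ×
        MvPolynomial (Fin n × Fin n) (↥(fixedSubfield φk))) →
        Matrix (Fin n) (Fin n) Ki → Ki := fun P M =>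
      MvPolynomial.eval₂ fC (fun p => M p.1 p.2) P.1 +
        jK * MvPolynomial.eval₂ fC (fun p => M p.1 p.2) P.2
    -- membership in `𝓕`
    let FCond : Subring K → Prop := fun F =>
      (∀ c : k, algebraMap R K (algebraMap k R c) ∈ F) ∧
      (∀ y : K, y ∈ F ↔ φK y ∈ F) ∧
      (∀ y ∈ F, (∀ z ∈ F, y * z = 0 → z = 0) → ∃ z ∈ F, y * z = 1)
    -- `G(K/F)`
    let GKF : Subring K → Set (Ki ≃+* Ki) := fun F =>
      {Ψ | GCond Ψ ∧ ∀ y : K, y ∈ F → Ψ (algebraMap K Ki y) = algebraMap K Ki y}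
    -- membership in `𝓖`: subgroups of `G` whose image under `ρ_U` is Zariski closed
    -- in `GL_n(C[i])`
    let HCond : Set (Ki ≃+* Ki) → Prop := fun H =>
      (∀ Ψ ∈ H, GCond Ψ) ∧ RingEquiv.refl Ki ∈ H ∧
      (∀ Ψ₁ ∈ H, ∀ Ψ₂ ∈ H, Ψ₁.trans Ψ₂ ∈ H) ∧ (∀ Ψ ∈ H, Ψ.symm ∈ H) ∧
      ∃ S : Set (MvPolynomial (Fin n × Fin n) (↥(fixedSubfield φk)) ×
          MvPolynomial (Fin n × Fin n) (↥(fixedSubfield φk))),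
        ρ '' H = {M | (∀ p q : Fin n, M p q ∈ Ci) ∧ IsUnit M.det ∧ ∀ P ∈ S, ev P M = 0}
    -- the fixed ring `K^H`
    let KH : Set (Ki ≃+* Ki) → Set K := fun H =>
      {y : K | ∀ Ψ ∈ H, Ψ (algebraMap K Ki y) = algebraMap K Ki y}
    ∀ H : Set (Ki ≃+* Ki), HCond H →
      ∃ F : Subring K, (F : Set K) = KH H ∧
        (∀ c : k, algebraMap R K (algebraMap k R c) ∈ F) ∧
        (∀ y : K, y ∈ F ↔ φK y ∈ F) ∧
        (∀ y ∈ F, (∀ z ∈ F, y * z = 0 → z = 0) → ∃ z ∈ F, y * z = 1) := by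
  intro fR fk fC RiSet Ci GCond ρ ev FCond GKF HCond KH H hH
  obtain ⟨-, -, ⟨_, -, hgen⟩, hsimple⟩ := hPV
  have hG := hH.1
  have := hsimple.isReduced
  have := hgen.finiteType
  have := Algebra.FiniteType.isNoetherianRing k R
  refine ⟨fixedSubring (algebraMap K Ki) H, Set.ext fun y => mem_fixedSubring, fun c => ?_,
    fun y => ?_, fun y hy hreg => ?_⟩
  · exact mem_fixedSubring.mpr fun Ψ hΨ => (hG Ψ hΨ).2.1 c
  · exact (map_mem_fixedSubring_iff φK φKi hcompatKi fun Ψ hΨ => (hG Ψ hΨ).1).symm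
  · exact exists_mem_fixedSubring_mul_eq_one (IsFractionRing.exists_mul_mul_eq_self R) hy hreg

/-- For every `H ∈ 𝓖` (a linear algebraic subgroup of the real difference Galois
group `G`), the fixed ring `K^H` is a `φ`-stable subring of `K` containing `k` in which
every non-zero-divisor is a unit. -/
theorem statement11
    {k : Type u} [Field k] [CharZero k] (φk : k ≃+* k)
    (hk_real : IsRealRing k)
    (hC_rc : IsRealClosedField (↥(fixedSubfield φk)))
    {n : ℕ} (A : Matrix (Fin n) (Fin n) k) (hA : IsUnit A.det)
    (R : Type v) [CommRing R] [Algebra k R] (φR : R ≃+* R)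
    (hPV : IsPicardVessiot k R φk φR A) (hRreal : IsRealRing R)
    (U : Matrix (Fin n) (Fin n) R) (hU : IsFundamentalMatrix φR A U)
    (hUgen : GeneratedByFund k U)
    -- `K`, the total ring of fractions of `R`
    (K : Type w) [CommRing K] [Algebra R K] [IsLocalization (nonZeroDivisors R) K]
    (φK : K ≃+* K) (hcompatK : DiffCompat K φR φK)
    -- `K[i]`
    (Ki : Type w) [CommRing Ki] [Algebra K Ki]
    (jK : Ki) (hKi : IsAdjoinI K Ki jK)
    (φKi : Ki ≃+* Ki) (hcompatKi : DiffCompat Ki φK φKi) (hφjK : φKi jK = jK) :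
    -- the embeddings of `R`, `k` and `C` into `K[i]`
    let fR : R → Ki := fun r => algebraMap K Ki (algebraMap R K r)
    let fk : k → Ki := fun c => fR (algebraMap k R c)
    let fC : (↥(fixedSubfield φk)) →+* Ki :=
      ((algebraMap K Ki).comp ((algebraMap R K).comp (algebraMap k R))).comp
        (fixedSubfield φk).subtype
    -- `R[i]` and `C[i]` inside `K[i]`
    let RiSet : Set Ki := {y | ∃ a b : R, y = fR a + fR b * jK}
    let Ci : Set Ki := {y | ∃ a b : k, φk a = a ∧ φk b = b ∧ y = fk a + fk b * jK}
    -- the real difference Galois group `G`: difference automorphisms of `K[i]` fixing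
    -- `k[i]` pointwise and stabilizing `R[i]` (i.e. the canonical extensions to `K[i]`
    -- of the difference automorphisms of `R[i]` fixing `k[i]` pointwise)
    let GCond : (Ki ≃+* Ki) → Prop := fun Ψ =>
      (∀ y : Ki, Ψ (φKi y) = φKi (Ψ y)) ∧ (∀ c : k, Ψ (fk c) = fk c) ∧ Ψ jK = jK ∧
      (∀ y ∈ RiSet, Ψ y ∈ RiSet) ∧ (∀ y ∈ RiSet, Ψ.symm y ∈ RiSet)
    -- `ρ_U`
    let ρ : (Ki ≃+* Ki) → Matrix (Fin n) (Fin n) Ki := fun Ψ =>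
      (U.map fR)⁻¹ * U.map fun r => Ψ (fR r)
    -- evaluation of a polynomial with coefficients in `C[i] = C + C·i` at a matrix
    let ev : (MvPolynomial (Fin n × Fin n) (↥(fixedSubfield φk)) ×
        MvPolynomial (Fin n × Fin n) (↥(fixedSubfield φk))) →
        Matrix (Fin n) (Fin n) Ki → Ki := fun P M =>
      MvPolynomial.eval₂ fC (fun p => M p.1 p.2) P.1 +
        jK * MvPolynomial.eval₂ fC (fun p => M p.1 p.2) P.2
    -- membership in `𝓕`
    let FCond : Subring K → Prop := fun F =>
      (∀ c : k, algebraMap R K (algebraMap k R c) ∈ F) ∧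
      (∀ y : K, y ∈ F ↔ φK y ∈ F) ∧
      (∀ y ∈ F, (∀ z ∈ F, y * z = 0 → z = 0) → ∃ z ∈ F, y * z = 1)
    -- `G(K/F)`
    let GKF : Subring K → Set (Ki ≃+* Ki) := fun F =>
      {Ψ | GCond Ψ ∧ ∀ y : K, y ∈ F → Ψ (algebraMap K Ki y) = algebraMap K Ki y}
    -- membership in `𝓖`: subgroups of `G` whose image under `ρ_U` is Zariski closed
    -- in `GL_n(C[i])`
    let HCond : Set (Ki ≃+* Ki) → Prop := fun H =>
      (∀ Ψ ∈ H, GCond Ψ) ∧ RingEquiv.refl Ki ∈ H ∧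
      (∀ Ψ₁ ∈ H, ∀ Ψ₂ ∈ H, Ψ₁.trans Ψ₂ ∈ H) ∧ (∀ Ψ ∈ H, Ψ.symm ∈ H) ∧
      ∃ S : Set (MvPolynomial (Fin n × Fin n) (↥(fixedSubfield φk)) ×
          MvPolynomial (Fin n × Fin n) (↥(fixedSubfield φk))),
        ρ '' H = {M | (∀ p q : Fin n, M p q ∈ Ci) ∧ IsUnit M.det ∧ ∀ P ∈ S, ev P M = 0}
    -- the fixed ring `K^H`
    let KH : Set (Ki ≃+* Ki) → Set K := fun H =>
      {y : K | ∀ Ψ ∈ H, Ψ (algebraMap K Ki y) = algebraMap K Ki y}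
    ∀ H : Set (Ki ≃+* Ki), HCond H →
      ∃ F : Subring K, (F : Set K) = KH H ∧
        (∀ c : k, algebraMap R K (algebraMap k R c) ∈ F) ∧
        (∀ y : K, y ∈ F ↔ φK y ∈ F) ∧
        (∀ y ∈ F, (∀ z ∈ F, y * z = 0 → z = 0) → ∃ z ∈ F, y * z = 1) :=
  statement11_general φk A R φR hPV U K φK Ki jK φKi hcompatKi
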